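/- Let λ ∈ ℝ with λ ≠ 0 and let A_λ be the fuzzy sphere algebra. Then the center of A_λ is trivial: an element a ∈ A_λ commutes with every element of A_λ if and only if a is a scalar multiple of the identity, i.e. Z(A_λ) = ℂ·1. -/

import Mathlib

open scoped BigOperators

/-- The Levi-Civita symbol on `{1,2,3}` (totally antisymmetric, `ε₁₂₃ = 1`), as a complex
number. -/
noncomputable def epsC (i j k : Fin 3) : ℂ :=
  (((j : ℕ) : ℂ) - ((i : ℕ) : ℂ)) * (((k : ℕ) : ℂ) - ((j : ℕ) : ℂ)) *
    (((k : ℕ) : ℂ) - ((i : ℕ) : ℂ)) / 2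

/-- The defining relations of the fuzzy sphere algebra: the commutation relations
`x_i x_j − x_j x_i = 2iλ ε_{ijk} x_k` and the sphere relation `Σ x_i² = 1 − λ²`. -/
inductive FuzzyRel (t : ℝ) : FreeAlgebra ℂ (Fin 3) → FreeAlgebra ℂ (Fin 3) → Prop
  | comm (i j : Fin 3) : FuzzyRel t
      (FreeAlgebra.ι ℂ i * FreeAlgebra.ι ℂ j - FreeAlgebra.ι ℂ j * FreeAlgebra.ι ℂ i)
      (∑ k, (2 * Complex.I * (t : ℂ) * epsC i j k) • FreeAlgebra.ι ℂ k)
  | sphere : FuzzyRel t (∑ i, FreeAlgebra.ι ℂ i * FreeAlgebra.ι ℂ i)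
      ((1 - (t : ℂ) ^ 2) • (1 : FreeAlgebra ℂ (Fin 3)))

/-- The fuzzy sphere algebra `A_λ`, the quotient of the free algebra on `x₁,x₂,x₃` by the
two-sided ideal generated by the fuzzy sphere relations. -/
abbrev FuzzyS2 (t : ℝ) := RingQuot (FuzzyRel t)

/-- The generators `x_i` of the fuzzy sphere algebra. -/
noncomputable def xgen (t : ℝ) (i : Fin 3) : FuzzyS2 t :=
  RingQuot.mkAlgHom ℂ (FuzzyRel t) (FreeAlgebra.ι ℂ i)

/-!
Write `e = x₁ + i x₂`, `f = x₁ - i x₂`, `z = x₃`. Then `[z, e] = 2λe`, `[z, f] = -2λf`, and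
`ef`, `fe` are polynomials in `z`, so `A_λ` is spanned by the elements `eᵏ p(z)` and `fᵏ p(z)`.
The algebra acts on `⨁_{k ∈ ℤ} ℂ[X] δₖ` with `z δₖ = (X + 2λk) δₖ`, `e` raising and `f` lowering
`k` with nonzero polynomial coefficients; as `ℂ[X]` is a domain, `a ↦ a δ₀` is injective. If `a`
is central, `a δ₀` has `z`-weight `X`, so for `λ ≠ 0` it is `p δ₀` and `a = p(z)`. Commuting
with `e` then gives `p(X + 2λ) = p`, so `p` is constant.
-/

open Polynomial

section General

variable {R A : Type*} [CommRing R] [Ring A] [Algebra R A]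

theorem Polynomial.aeval_mul_of_mul_eq_mul_add {z y : A} {c : R}
    (h : z * y = y * (z + algebraMap R A c)) (p : R[X]) :
    aeval z p * y = y * aeval z (p.comp (X + C c)) := by
  have hy : SemiconjBy y (z + algebraMap R A c) z := h.symm
  rw [aeval_comp, map_add, aeval_X, aeval_C, aeval_eq_sum_range, aeval_eq_sum_range,
    Finset.sum_mul, Finset.mul_sum]
  refine Finset.sum_congr rfl fun i _ => ?_
  rw [smul_mul_assoc, mul_smul_comm, (hy.pow_right i).eq]

theorem mul_pow_of_mul_eq_mul_add {z y : A} {c : R}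
    (h : z * y = y * (z + algebraMap R A c)) (n : ℕ) :
    z * y ^ n = y ^ n * (z + algebraMap R A (n * c)) := by
  induction n with
  | zero => simp
  | succ n ih =>
    rw [pow_succ, ← mul_assoc, ih, mul_assoc, add_mul, h, Algebra.commutes, ← mul_add,
      ← mul_assoc, add_assoc, ← map_add]
    congr 3
    push_cast
    ring

theorem Polynomial.eq_C_of_comp_X_add_C_eq_self [IsDomain R] [CharZero R] {p : R[X]} {c : R}
    (hc : c ≠ 0) (h : p.comp (X + C c) = p) : p = C (p.eval 0) := by
  have hperiodic : ∀ n : ℕ, p.eval (n * c) = p.eval 0 := by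
    intro n
    induction n with
    | zero => simp
    | succ n ih =>
      rw [← ih]
      conv_rhs => rw [← h]
      simp [add_mul]
  rw [← sub_eq_zero]
  refine eq_zero_of_infinite_isRoot _ (Set.infinite_of_injective_forall_mem
    (f := fun n : ℕ => n * c) (fun m n hmn => ?_) fun n => by simp [hperiodic])
  exact_mod_cast mul_right_cancel₀ hc hmn

end General

theorem Submodule.eq_top_of_one_mem_of_mul_mem {R A ι : Type*} [CommSemiring R] [Semiring A]
    [Algebra R A] {x : ι → A} (hx : Algebra.adjoin R (Set.range x) = ⊤) {S : Submodule R A}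
    (h1 : 1 ∈ S) (hS : ∀ i, ∀ s ∈ S, x i * s ∈ S) : S = ⊤ := by
  suffices ∀ a ∈ Algebra.adjoin R (Set.range x), ∀ s ∈ S, a * s ∈ S by
    refine eq_top_iff.mpr fun a _ => ?_
    simpa using this a (hx ▸ Algebra.mem_top) 1 h1
  intro a ha
  induction ha using Algebra.adjoin_induction with
  | mem _ h => obtain ⟨i, rfl⟩ := h; exact hS i
  | algebraMap r => intro s hs; rw [← Algebra.smul_def]; exact S.smul_mem r hs
  | add _ _ _ _ h₁ h₂ => intro s hs; rw [add_mul]; exact add_mem (h₁ s hs) (h₂ s hs)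
  | mul _ _ _ _ h₁ h₂ => intro s hs; rw [mul_assoc]; exact h₁ _ (h₂ s hs)

namespace FuzzyS2

open Complex

variable {t : ℝ}

theorem adjoin_range_xgen : Algebra.adjoin ℂ (Set.range (xgen t)) = ⊤ := by
  rw [show xgen t = RingQuot.mkAlgHom ℂ (FuzzyRel t) ∘ FreeAlgebra.ι ℂ from rfl, Set.range_comp,
    ← AlgHom.map_adjoin, FreeAlgebra.adjoin_range_ι, Algebra.map_top, AlgHom.range_eq_top]
  exact RingQuot.mkAlgHom_surjective ℂ _

theorem xgen_mul_xgen_sub (i j : Fin 3) :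
    xgen t i * xgen t j - xgen t j * xgen t i
      = ∑ k, (2 * I * t * epsC i j k) • xgen t k := by
  simpa only [map_sub, map_mul, map_sum, map_smul, xgen] using
    RingQuot.mkAlgHom_rel ℂ (FuzzyRel.comm (t := t) i j)

theorem sum_xgen_mul_self : ∑ i, xgen t i * xgen t i = (1 - (t : ℂ) ^ 2) • 1 := by
  simpa only [map_sum, map_mul, map_smul, map_one, xgen] using
    RingQuot.mkAlgHom_rel ℂ (FuzzyRel.sphere (t := t))

theorem xgen_mul_xgen_eq (i j k : Fin 3) (hijk : epsC i j k = 1) :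
    xgen t i * xgen t j = xgen t j * xgen t i + (2 * I * t) • xgen t k := by
  have h := xgen_mul_xgen_sub (t := t) i j
  rw [Fin.sum_univ_three] at h
  fin_cases i <;> fin_cases j <;> fin_cases k <;> norm_num [epsC] at hijk <;>
    norm_num [epsC] at h <;> simp only [Fin.reduceFinMk, Fin.isValue] at h ⊢ <;>
    linear_combination (norm := module) h

noncomputable def raise (t : ℝ) : FuzzyS2 t := xgen t 0 + I • xgen t 1

noncomputable def lower (t : ℝ) : FuzzyS2 t := xgen t 0 - I • xgen t 1

section Ladder

variable {B : Type*} [Ring B] [Algebra ℂ B]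

/-- The commutation relations of an `𝔰𝔩₂`-triple rescaled by `2λ`, and the value of the
Casimir element. -/
structure IsLadder (t : ℝ) (e f z : B) : Prop where
  z_mul_e : z * e = e * z + (2 * t : ℂ) • e
  z_mul_f : z * f = f * z - (2 * t : ℂ) • f
  e_mul_f : e * f = (1 - t ^ 2 : ℂ) • 1 + (2 * t : ℂ) • z - z * z
  f_mul_e : f * e = (1 - t ^ 2 : ℂ) • 1 - (2 * t : ℂ) • z - z * z

namespace IsLadder

variable {e f z : B}

theorem lift_rel (h : IsLadder t e f z) ⦃a b : FreeAlgebra ℂ (Fin 3)⦄ (hab : FuzzyRel t a b) :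
    FreeAlgebra.lift ℂ ![(2⁻¹ : ℂ) • (e + f), (I / 2) • (f - e), z] a
      = FreeAlgebra.lift ℂ ![(2⁻¹ : ℂ) • (e + f), (I / 2) • (f - e), z] b := by
  induction hab with
  | comm i j =>
    simp only [map_sub, map_mul, map_sum, map_smul, FreeAlgebra.lift_ι_apply]
    fin_cases i <;> fin_cases j <;>
      simp only [Matrix.cons_val_zero, Matrix.cons_val_one, Matrix.cons_val_two,
        Matrix.head_cons, Matrix.tail_cons, Fin.sum_univ_three, epsC, Fin.isValue] <;>
      norm_num <;>
      simp only [mul_add, add_mul, mul_sub, sub_mul, smul_mul_assoc, mul_smul_comm,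
        h.z_mul_e, h.z_mul_f, h.e_mul_f, h.f_mul_e] <;>
      match_scalars <;> (first | ring1 | (ring_nf; simp [I_sq]; try ring1))
  | sphere =>
    simp only [Fin.sum_univ_three, map_add, map_mul, map_smul, map_one, FreeAlgebra.lift_ι_apply,
      Matrix.cons_val_zero, Matrix.cons_val_one, Matrix.cons_val_two,
      Matrix.head_cons, Matrix.tail_cons]
    simp only [mul_add, add_mul, mul_sub, sub_mul, smul_mul_assoc, mul_smul_comm,
      h.e_mul_f, h.f_mul_e, smul_add, smul_sub, smul_smul]
    match_scalars <;> (first | ring1 | (ring_nf; simp [I_sq]; try ring1))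

noncomputable def lift (h : IsLadder t e f z) : FuzzyS2 t →ₐ[ℂ] B :=
  RingQuot.liftAlgHom ℂ ⟨FreeAlgebra.lift ℂ ![(2⁻¹ : ℂ) • (e + f), (I / 2) • (f - e), z],
    h.lift_rel⟩

theorem lift_xgen (h : IsLadder t e f z) (i : Fin 3) :
    h.lift (xgen t i) = ![(2⁻¹ : ℂ) • (e + f), (I / 2) • (f - e), z] i := by
  rw [xgen, lift, RingQuot.liftAlgHom_mkAlgHom_apply, FreeAlgebra.lift_ι_apply]

theorem lift_raise (h : IsLadder t e f z) : h.lift (raise t) = e := by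
  rw [raise, map_add, map_smul, lift_xgen, lift_xgen]
  simp only [Matrix.cons_val_zero, Matrix.cons_val_one]
  match_scalars <;> norm_num [Complex.ext_iff]

theorem lift_lower (h : IsLadder t e f z) : h.lift (lower t) = f := by
  rw [lower, map_sub, map_smul, lift_xgen, lift_xgen]
  simp only [Matrix.cons_val_zero, Matrix.cons_val_one]
  match_scalars <;> norm_num [Complex.ext_iff]

theorem lift_xgen_two (h : IsLadder t e f z) : h.lift (xgen t 2) = z :=
  h.lift_xgen 2

theorem z_mul_e_eq (h : IsLadder t e f z) : z * e = e * (z + algebraMap ℂ B (2 * t)) := by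
  rw [h.z_mul_e, mul_add, ← Algebra.commutes, ← Algebra.smul_def]

theorem z_mul_f_eq (h : IsLadder t e f z) : z * f = f * (z + algebraMap ℂ B (-(2 * t))) := by
  rw [h.z_mul_f, mul_add, ← Algebra.commutes, ← Algebra.smul_def, neg_smul, sub_eq_add_neg]

theorem e_mul_f_eq_aeval (h : IsLadder t e f z) :
    e * f = aeval z (1 - (X - C (t : ℂ)) ^ 2) := by
  rw [h.e_mul_f, show (1 - (X - C (t : ℂ)) ^ 2)
      = C (1 - (t : ℂ) ^ 2) + C (2 * (t : ℂ)) * X - X ^ 2 by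
    simp only [map_sub, map_pow, map_one, map_mul, map_ofNat]; ring]
  simp [Algebra.smul_def, sq]

theorem f_mul_e_eq_aeval (h : IsLadder t e f z) :
    f * e = aeval z (1 - (X + C (t : ℂ)) ^ 2) := by
  rw [h.f_mul_e, show (1 - (X + C (t : ℂ)) ^ 2)
      = C (1 - (t : ℂ) ^ 2) - C (2 * (t : ℂ)) * X - X ^ 2 by
    simp only [map_sub, map_pow, map_one, map_mul, map_ofNat]; ring]
  simp [Algebra.smul_def, sq]

end IsLadder

end Ladder

theorem isLadder : IsLadder t (raise t) (lower t) (xgen t 2) := by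
  have h01 := xgen_mul_xgen_eq (t := t) 0 1 2 (by norm_num [epsC])
  have h12 := xgen_mul_xgen_eq (t := t) 1 2 0 (by norm_num [epsC])
  have h20 := xgen_mul_xgen_eq (t := t) 2 0 1 (by norm_num [epsC])
  have hs := sum_xgen_mul_self (t := t)
  rw [Fin.sum_univ_three] at hs
  constructor <;> simp only [raise, lower, mul_add, add_mul, mul_sub, sub_mul, smul_mul_assoc,
    mul_smul_comm, smul_add, smul_sub, smul_smul]
  · linear_combination (norm := (match_scalars <;> ring_nf; simp [I_sq])) h20 - I • h12
  · linear_combination (norm := (match_scalars <;> ring_nf; simp [I_sq])) h20 + I • h12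
  · linear_combination (norm := match_scalars <;> ring_nf <;> simp [I_sq]) hs - I • h01
  · linear_combination (norm := match_scalars <;> ring_nf <;> simp [I_sq]) hs + I • h01

noncomputable def ladderPow (t : ℝ) : ℤ → FuzzyS2 t
  | Int.ofNat n => raise t ^ n
  | Int.negSucc n => lower t ^ (n + 1)

theorem ladderPow_natCast (n : ℕ) : ladderPow t n = raise t ^ n := rfl

theorem ladderPow_zero : ladderPow t 0 = 1 := pow_zero _

theorem ladderPow_neg_natCast (n : ℕ) : ladderPow t (-n) = lower t ^ n := by
  cases n with
  | zero => simp [ladderPow_zero]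
  | succ n => rfl

theorem xgen_two_mul_ladderPow (k : ℤ) :
    xgen t 2 * ladderPow t k = ladderPow t k * aeval (xgen t 2) (X + C (2 * (t : ℂ) * k)) := by
  cases k with
  | ofNat n =>
    rw [Int.ofNat_eq_natCast, ladderPow_natCast,
      mul_pow_of_mul_eq_mul_add isLadder.z_mul_e_eq n]
    simp [mul_comm]
  | negSucc n =>
    rw [ladderPow, mul_pow_of_mul_eq_mul_add isLadder.z_mul_f_eq (n + 1)]
    simp only [map_add, aeval_X, aeval_C, Int.cast_negSucc]
    congr 3
    push_cast
    ring

noncomputable def normalForm (t : ℝ) : (ℤ →₀ ℂ[X]) →ₗ[ℂ] FuzzyS2 t :=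
  Finsupp.lsum ℂ fun k => (LinearMap.mulLeft ℂ (ladderPow t k)).comp
    (aeval (xgen t 2)).toLinearMap

theorem normalForm_single (k : ℤ) (p : ℂ[X]) :
    normalForm t (Finsupp.single k p) = ladderPow t k * aeval (xgen t 2) p := by
  simp [normalForm]

theorem ladderPow_mul_aeval_mem (k : ℤ) (p : ℂ[X]) :
    ladderPow t k * aeval (xgen t 2) p ∈ LinearMap.range (normalForm t) :=
  ⟨Finsupp.single k p, normalForm_single k p⟩

theorem mul_mem_range_normalForm {x : FuzzyS2 t}
    (hx : ∀ (k : ℤ) (p : ℂ[X]),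
      x * (ladderPow t k * aeval (xgen t 2) p) ∈ LinearMap.range (normalForm t)) :
    ∀ s ∈ LinearMap.range (normalForm t), x * s ∈ LinearMap.range (normalForm t) := by
  rintro _ ⟨P, rfl⟩
  induction P using Finsupp.induction_linear with
  | zero => simp
  | add P Q hP hQ => rw [map_add, mul_add]; exact add_mem hP hQ
  | single k p => rw [normalForm_single]; exact hx k p

theorem xgen_two_mul_mem_range_normalForm :
    ∀ s ∈ LinearMap.range (normalForm t), xgen t 2 * s ∈ LinearMap.range (normalForm t) :=
  mul_mem_range_normalForm fun k p => by
    rw [← mul_assoc, xgen_two_mul_ladderPow, mul_assoc, ← map_mul]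
    exact ladderPow_mul_aeval_mem _ _

theorem raise_mul_mem_range_normalForm :
    ∀ s ∈ LinearMap.range (normalForm t), raise t * s ∈ LinearMap.range (normalForm t) :=
  mul_mem_range_normalForm fun k p => by
    rw [← mul_assoc]
    cases k with
    | ofNat n =>
      rw [Int.ofNat_eq_natCast, ladderPow_natCast, ← pow_succ', ← ladderPow_natCast]
      exact ladderPow_mul_aeval_mem _ _
    | negSucc n =>
      rw [ladderPow, pow_succ', ← mul_assoc, isLadder.e_mul_f_eq_aeval,
        aeval_mul_of_mul_eq_mul_add (mul_pow_of_mul_eq_mul_add isLadder.z_mul_f_eq n),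
        mul_assoc, ← map_mul, ← ladderPow_neg_natCast]
      exact ladderPow_mul_aeval_mem _ _

theorem lower_mul_mem_range_normalForm :
    ∀ s ∈ LinearMap.range (normalForm t), lower t * s ∈ LinearMap.range (normalForm t) :=
  mul_mem_range_normalForm fun k p => by
    rw [← mul_assoc]
    rcases k with (_ | n) | n
    · rw [Int.ofNat_eq_natCast, Nat.cast_zero, ladderPow_zero, mul_one, ← pow_one (lower t)]
      exact ladderPow_mul_aeval_mem (Int.negSucc 0) p
    · rw [Int.ofNat_eq_natCast, ladderPow_natCast, pow_succ', ← mul_assoc,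
        isLadder.f_mul_e_eq_aeval,
        aeval_mul_of_mul_eq_mul_add (mul_pow_of_mul_eq_mul_add isLadder.z_mul_e_eq n),
        mul_assoc, ← map_mul, ← ladderPow_natCast]
      exact ladderPow_mul_aeval_mem _ _
    · rw [ladderPow, ← pow_succ']
      exact ladderPow_mul_aeval_mem (Int.negSucc (n + 1)) p

theorem normalForm_surjective : Function.Surjective (normalForm t) := by
  refine LinearMap.range_eq_top.mp
    (Submodule.eq_top_of_one_mem_of_mul_mem adjoin_range_xgen ?_ fun i => ?_)
  · simpa [ladderPow_zero] using ladderPow_mul_aeval_mem (t := t) 0 1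
  · have hx0 : xgen t 0 = (2⁻¹ : ℂ) • (raise t + lower t) := by
      rw [raise, lower]; module
    have hx1 : xgen t 1 = (I / 2) • (lower t - raise t) := by
      rw [raise, lower]; match_scalars <;> ring_nf; simp [I_sq]
    intro s hs
    fin_cases i
    · rw [Fin.zero_eta, hx0, smul_mul_assoc, add_mul]
      exact Submodule.smul_mem _ _ (add_mem (raise_mul_mem_range_normalForm s hs)
        (lower_mul_mem_range_normalForm s hs))
    · rw [Fin.mk_one, hx1, smul_mul_assoc, sub_mul]
      exact Submodule.smul_mem _ _ (sub_mem (lower_mul_mem_range_normalForm s hs)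
        (raise_mul_mem_range_normalForm s hs))
    · exact xgen_two_mul_mem_range_normalForm s hs

end FuzzyS2

section WeightedShift

variable {G R : Type*} [CommSemiring R]

noncomputable def weightedShift [Add G] (d : G) (w : G → R) : Module.End R (G →₀ R) :=
  Finsupp.linearCombination R fun n => Finsupp.single (n + d) (w n)

theorem weightedShift_single [Add G] (d : G) (w : G → R) (n : G) (p : R) :
    weightedShift d w (Finsupp.single n p) = Finsupp.single (n + d) (p * w n) := by
  rw [weightedShift, Finsupp.linearCombination_single, Finsupp.smul_single, smul_eq_mul]

theorem weightedShift_zero_apply [AddZeroClass G] (w : G → R) (v : G →₀ R) (n : G) :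
    weightedShift 0 w v n = v n * w n := by
  classical
  induction v using Finsupp.induction_linear with
  | zero => simp
  | add v v' hv hv' => simp [hv, hv', add_mul]
  | single m p =>
    rw [weightedShift_single, add_zero, Finsupp.single_apply, Finsupp.single_apply]
    split_ifs <;> simp_all

end WeightedShift

namespace FuzzyS2

variable {t : ℝ}

noncomputable def weightOp (t : ℝ) : Module.End ℂ[X] (ℤ →₀ ℂ[X]) :=
  weightedShift 0 fun n => X + C (2 * (t : ℂ) * n)

noncomputable def raiseOp : Module.End ℂ[X] (ℤ →₀ ℂ[X]) :=
  weightedShift 1 1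

noncomputable def lowerOp (t : ℝ) : Module.End ℂ[X] (ℤ →₀ ℂ[X]) :=
  weightedShift (-1) fun n => 1 - (X + C ((t : ℂ) * (2 * n - 1))) ^ 2

theorem isLadder_ops : IsLadder t raiseOp (lowerOp t) (weightOp t) := by
  constructor <;> refine Finsupp.lhom_ext fun n p => ?_ <;>
    simp only [Module.End.mul_apply, LinearMap.add_apply, LinearMap.sub_apply,
      LinearMap.smul_apply, Module.End.one_apply, raiseOp, lowerOp, weightOp,
      weightedShift_single, Finsupp.smul_single, ← Finsupp.single_add, ← Finsupp.single_sub,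
      add_zero, Pi.one_apply, mul_one, neg_add_cancel_right, add_neg_cancel_right]
  all_goals
    congr 1
    simp only [smul_eq_C_mul, map_add, map_sub, map_mul, map_one, map_pow, map_neg, map_ofNat,
      Int.cast_add, Int.cast_one, Int.cast_neg]
    ring

theorem weightOp_single (n : ℤ) (p : ℂ[X]) :
    weightOp t (Finsupp.single n p) = (X + C (2 * (t : ℂ) * n)) • Finsupp.single n p := by
  rw [weightOp, weightedShift_single, Finsupp.smul_single, smul_eq_mul, add_zero, mul_comm]

theorem eq_single_zero_of_weightOp_eq_smul (ht : t ≠ 0) {v : ℤ →₀ ℂ[X]}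
    (hv : weightOp t v = (X : ℂ[X]) • v) : v = Finsupp.single 0 (v 0) := by
  refine Finsupp.ext fun k => ?_
  rcases eq_or_ne k 0 with rfl | hk
  · simp
  have hk' := DFunLike.congr_fun hv k
  simp only [weightOp, weightedShift_zero_apply, Finsupp.smul_apply, smul_eq_mul] at hk'
  have hC : C (2 * (t : ℂ) * k) ≠ 0 := by simp [ht, hk]
  rw [Finsupp.single_eq_of_ne hk]
  exact (mul_eq_zero.mp (by linear_combination hk')).resolve_right hC

/-- `X` is a generic weight: evaluating at `X = μ` gives the weight module of `A_λ` with weights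
`μ + 2λℤ`. -/
noncomputable def weightRep (t : ℝ) : FuzzyS2 t →ₐ[ℂ] Module.End ℂ[X] (ℤ →₀ ℂ[X]) :=
  isLadder_ops.lift

theorem weightRep_xgen_two : weightRep t (xgen t 2) = weightOp t := isLadder_ops.lift_xgen_two

theorem weightRep_raise : weightRep t (raise t) = raiseOp := isLadder_ops.lift_raise

theorem weightRep_lower : weightRep t (lower t) = lowerOp t := isLadder_ops.lift_lower

theorem weightRep_aeval_single (p : ℂ[X]) (n : ℤ) :
    weightRep t (aeval (xgen t 2) p) (Finsupp.single n 1)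
      = Finsupp.single n (p.comp (X + C (2 * (t : ℂ) * n))) := by
  have hv : (weightOp t).HasEigenvector (X + C (2 * (t : ℂ) * n)) (Finsupp.single n 1) :=
    Module.End.hasEigenvector_iff.mpr
      ⟨Module.End.mem_eigenspace_iff.mpr (weightOp_single n 1), by simp⟩
  rw [← aeval_algHom_apply, weightRep_xgen_two, ← aeval_map_algebraMap ℂ[X],
    Module.End.aeval_apply_of_hasEigenvector hv, eval_map_algebraMap, ← comp_eq_aeval,
    Finsupp.smul_single, smul_eq_mul, mul_one]

theorem one_sub_X_add_C_sq_ne_zero (c : ℂ) : (1 - (X + C c) ^ 2 : ℂ[X]) ≠ 0 :=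
  fun h => by simpa using congrArg (eval (-c)) h

theorem exists_lowerOp_pow_single_zero (n : ℕ) :
    ∃ g ≠ 0, (lowerOp t ^ n) (Finsupp.single 0 1) = Finsupp.single (-(n : ℤ)) g := by
  induction n with
  | zero => exact ⟨1, one_ne_zero, by simp⟩
  | succ n ih =>
    obtain ⟨g, hg, hgn⟩ := ih
    rw [pow_succ', Module.End.mul_apply, hgn, lowerOp, weightedShift_single]
    refine ⟨_, ?_, congrArg₂ _ (by push_cast; ring) rfl⟩
    exact mul_ne_zero hg (one_sub_X_add_C_sq_ne_zero _)

theorem exists_weightRep_ladderPow_single_zero (k : ℤ) :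
    ∃ g ≠ 0, weightRep t (ladderPow t k) (Finsupp.single 0 1) = Finsupp.single k g := by
  obtain ⟨n, rfl | rfl⟩ := Int.eq_nat_or_neg k
  · refine ⟨1, one_ne_zero, ?_⟩
    rw [ladderPow_natCast, map_pow, weightRep_raise]
    induction n with
    | zero => simp
    | succ n ih =>
      rw [pow_succ', Module.End.mul_apply, ih, raiseOp, weightedShift_single]
      simp
  · rw [ladderPow_neg_natCast, map_pow, weightRep_lower]
    exact exists_lowerOp_pow_single_zero n

theorem weightRep_apply_single_zero_injective :
    Function.Injective fun a : FuzzyS2 t => weightRep t a (Finsupp.single 0 1) := by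
  classical
  choose g hg0 hg using exists_weightRep_ladderPow_single_zero (t := t)
  have hcoord (P : ℤ →₀ ℂ[X]) (n : ℤ) :
      weightRep t (normalForm t P) (Finsupp.single 0 1) n = P n * g n := by
    induction P using Finsupp.induction_linear with
    | zero => simp
    | add P Q hP hQ => simp [hP, hQ, add_mul]
    | single k p =>
      have hp : weightRep t (aeval (xgen t 2) p) (Finsupp.single 0 1)
          = p • Finsupp.single 0 1 := by
        simp [weightRep_aeval_single, Finsupp.smul_single]
      rw [normalForm_single, map_mul, Module.End.mul_apply, hp, map_smul, hg,
        Finsupp.smul_apply]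
      rcases eq_or_ne k n with rfl | h <;> simp [*]
  intro a b hab
  obtain ⟨P, rfl⟩ := normalForm_surjective a
  obtain ⟨Q, rfl⟩ := normalForm_surjective b
  refine congrArg _ (Finsupp.ext fun n => mul_right_cancel₀ (hg0 n) ?_)
  rw [← hcoord, ← hcoord]
  exact DFunLike.congr_fun hab n

theorem eq_smul_one_of_forall_mul_comm (ht : t ≠ 0) {a : FuzzyS2 t}
    (ha : ∀ b, a * b = b * a) : ∃ c : ℂ, a = c • 1 := by
  have hcomm (b : FuzzyS2 t) (v : ℤ →₀ ℂ[X]) :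
      weightRep t a (weightRep t b v) = weightRep t b (weightRep t a v) := by
    rw [← Module.End.mul_apply, ← map_mul, ha, map_mul, Module.End.mul_apply]
  obtain ⟨p, hp⟩ : ∃ p, weightRep t a (Finsupp.single 0 1) = Finsupp.single 0 p := by
    refine ⟨_, eq_single_zero_of_weightOp_eq_smul ht ?_⟩
    rw [← weightRep_xgen_two, ← hcomm, weightRep_xgen_two, weightOp_single, map_smul]
    simp
  have ha_eq : a = aeval (xgen t 2) p :=
    weightRep_apply_single_zero_injective (by simp [weightRep_aeval_single, hp])
  have hshift : p.comp (X + C (2 * (t : ℂ))) = p := by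
    have he := hcomm (raise t) (Finsupp.single 0 1)
    rw [weightRep_raise, hp, raiseOp, weightedShift_single, weightedShift_single, ha_eq] at he
    simp only [zero_add, Pi.one_apply, mul_one, weightRep_aeval_single] at he
    simpa using Finsupp.single_injective _ he
  obtain ⟨c, hc⟩ : ∃ c, p = C c := ⟨_, eq_C_of_comp_X_add_C_eq_self (by simpa using ht) hshift⟩
  exact ⟨c, by rw [ha_eq, hc, aeval_C, Algebra.algebraMap_eq_smul_one]⟩

end FuzzyS2

/-- For `λ ≠ 0`, the fuzzy sphere algebra `A_λ` has trivial center: an element commutes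
with every element if and only if it is a scalar multiple of the identity, i.e.
`Z(A_λ) = ℂ·1`. -/
theorem fuzzy_sphere_center_trivial (t : ℝ) (ht : t ≠ 0) :
    Subalgebra.center ℂ (FuzzyS2 t) = ⊥ ∧
      ∀ a : FuzzyS2 t, (∀ b : FuzzyS2 t, a * b = b * a) ↔
        ∃ c : ℂ, a = c • (1 : FuzzyS2 t) := by
  have hcentral (a : FuzzyS2 t) : (∀ b, a * b = b * a) ↔ ∃ c : ℂ, a = c • 1 :=
    ⟨FuzzyS2.eq_smul_one_of_forall_mul_comm ht, by
      rintro ⟨c, rfl⟩ b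
      rw [smul_one_mul, mul_smul_one]⟩
  refine ⟨eq_bot_iff.mpr fun a ha => ?_, hcentral⟩
  obtain ⟨c, rfl⟩ := (hcentral a).mp fun b => (Subalgebra.mem_center_iff.mp ha b).symm
  exact Subalgebra.smul_mem _ (Subalgebra.one_mem _) c
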